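/- Fix n ≥ 1, d ≥ 2, and set r = C(n+d,n) - 1 and k = ⌊d/2⌋. Let q ∈ P^r and let S ⊂ P^n be a finite set such that ν_d(S) minimally spans q. Assume |S| ≤ C(n+k,n) and that S imposes |S| independent conditions on ℂ[z_0,…,z_n]_k. Then the rank of q with respect to the Veronese variety ν_d(P^n) equals |S|; that is, no set A ⊂ P^n with |A| < |S| satisfies q ∈ span(ν_d(A)). -/
import Mathlib


open MvPolynomial Function

/-- Complex projective `n`-space, as the projectivization of `ℂ^{n+1}`. -/
abbrev Pn (n : ℕ) := Projectivization ℂ (Fin (n + 1) → ℂ)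

/-- The linear span (as a vector subspace) of a set of projective points. -/
def pspan {V : Type*} [AddCommGroup V] [Module ℂ V] (E : Set (Projectivization ℂ V)) :
    Submodule ℂ V :=
  Submodule.span ℂ (Projectivization.rep '' E)

/-- `E` minimally spans `q`: `q` lies in the span of `E` but in the span of no proper subset. -/
def MinimallySpans {V : Type*} [AddCommGroup V] [Module ℂ V]
    (E : Set (Projectivization ℂ V)) (q : Projectivization ℂ V) : Prop :=
  q.rep ∈ pspan E ∧ ∀ E' ⊂ E, q.rep ∉ pspan E'

/-- `E ⊂ P^n` imposes `|E|` independent conditions on degree-`t` forms: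
the evaluation map from `ℂ[z_0,…,z_n]_t` to `ℂ^E` is surjective. -/
def ImposesIndep (n t : ℕ) (E : Set (Pn n)) : Prop :=
  Surjective (fun (g : homogeneousSubmodule (Fin (n + 1)) ℂ t) (p : E) =>
    eval (Projectivization.rep (p : Pn n)) (g : MvPolynomial (Fin (n + 1)) ℂ))

/-- The `d`-th power of the linear form with coefficient vector `v`. -/
noncomputable def linPow (n d : ℕ) (v : Fin (n + 1) → ℂ) : MvPolynomial (Fin (n + 1)) ℂ :=
  (∑ i, C (v i) * X i) ^ d

/-- The span of the image under the degree-`d` Veronese embedding of a set `S ⊂ P^n`,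
as a subspace of the polynomial ring. -/
noncomputable def veroneseSpan (n d : ℕ) (S : Set (Pn n)) : Submodule ℂ (MvPolynomial (Fin (n + 1)) ℂ) :=
  Submodule.span ℂ ((fun p : Pn n => linPow n d (Projectivization.rep p)) '' S)

/-- `ν_d(S)` minimally spans the point `q` of `P^r = P(ℂ[z_0,…,z_n]_d)`. -/
def MinSpansVer (n d : ℕ) (S : Set (Pn n))
    (q : Projectivization ℂ (homogeneousSubmodule (Fin (n + 1)) ℂ d)) : Prop :=
  (Projectivization.rep q).1 ∈ veroneseSpan n d S ∧
    ∀ S' ⊂ S, (Projectivization.rep q).1 ∉ veroneseSpan n d S'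

/-- `S ⊂ P^m` is in linearly general position: every subset of cardinality at most `m + 1`
is linearly independent. -/
def LGP (m : ℕ) (S : Set (Pn m)) : Prop :=
  ∀ B ⊆ S, B.Finite → B.ncard ≤ m + 1 →
    LinearIndependent ℂ (fun p : B => Projectivization.rep (p : Pn m))

/-- The evaluation linear map from degree-`t` forms to `ℂ^E`. -/
noncomputable def evalLM (n t : ℕ) (E : Set (Pn n)) :
    homogeneousSubmodule (Fin (n + 1)) ℂ t →ₗ[ℂ] (E → ℂ) where
  toFun g p := eval (Projectivization.rep (p : Pn n)) g.1
  map_add' g₁ g₂ := by funext p; simp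
  map_smul' c g := by funext p; simp [MvPolynomial.smul_eval]

lemma coeff_linPow (n d : ℕ) (v : Fin (n+1) → ℂ) (α : Fin (n+1) →₀ ℕ)
    (hα : ∑ i, α i = d) :
    coeff α (linPow n d v) = (Nat.multinomial Finset.univ ⇑α : ℂ) * ∏ i, v i ^ α i := by
  classical
  rw [linPow, Finset.sum_pow_eq_sum_piAntidiag, coeff_sum]
  have hterm : ∀ k : Fin (n+1) → ℕ,
      coeff α ((Nat.multinomial Finset.univ k : MvPolynomial (Fin (n+1)) ℂ) *
        ∏ i, (C (v i) * X i) ^ k i)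
      = if k = ⇑α then (Nat.multinomial Finset.univ k : ℂ) * ∏ i, v i ^ k i else 0 := by
    intro k
    have hprod : (∏ i, (C (v i) * X i) ^ k i : MvPolynomial (Fin (n+1)) ℂ)
        = monomial (Finsupp.equivFunOnFinite.symm k) (∏ i, v i ^ k i) := by
      rw [monomial_eq, Finsupp.prod_fintype _ _ (fun i => pow_zero _)]
      have : ∀ i : Fin (n+1), (C (v i) * X i) ^ k i
          = C (v i ^ k i) * X i ^ ((Finsupp.equivFunOnFinite.symm k) i) := by
        intro i
        rw [mul_pow, C_pow]
        rfl
      rw [Finset.prod_congr rfl (fun i _ => this i), Finset.prod_mul_distrib, map_prod]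
    rw [hprod, ← map_natCast (C : ℂ →+* MvPolynomial (Fin (n+1)) ℂ), C_mul_monomial,
      coeff_monomial]
    by_cases hk : k = ⇑α
    · rw [if_pos, if_pos hk]
      rw [hk]
      exact (Equiv.symm_apply_eq _).mpr rfl
    · rw [if_neg, if_neg hk]
      intro hc
      exact hk ((Equiv.symm_apply_eq _).mp hc)
  rw [Finset.sum_congr rfl (fun k _ => hterm k), Finset.sum_ite_eq']
  rw [if_pos]
  simp [Finset.mem_piAntidiag, hα]

noncomputable def dualPow (n : ℕ) (h : MvPolynomial (Fin (n+1)) ℂ) :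
    MvPolynomial (Fin (n+1)) ℂ →ₗ[ℂ] ℂ :=
  ∑ α ∈ h.support, (coeff α h * ((Nat.multinomial Finset.univ ⇑α : ℂ))⁻¹) • lcoeff ℂ α

lemma dualPow_linPow (n d : ℕ) (h : MvPolynomial (Fin (n+1)) ℂ)
    (hh : h.IsHomogeneous d) (v : Fin (n+1) → ℂ) :
    dualPow n h (linPow n d v) = eval v h := by
  rw [dualPow, LinearMap.sum_apply, eval_eq']
  refine Finset.sum_congr rfl fun α hα => ?_
  have hdeg : ∑ i, α i = d := by
    have hdeg' : Finsupp.degree α = d := by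
      by_contra hne
      exact mem_support_iff.mp hα (hh.coeff_eq_zero hne)
    rw [← hdeg', Finsupp.degree]
    exact (Finset.sum_subset (Finset.subset_univ _)
      (fun i _ hi => Finsupp.notMem_support_iff.mp hi)).symm
  rw [LinearMap.smul_apply, lcoeff_apply, smul_eq_mul, coeff_linPow n d v α hdeg]
  have hm : (Nat.multinomial Finset.univ ⇑α : ℂ) ≠ 0 :=
    Nat.cast_ne_zero.mpr (Nat.multinomial_pos _ _).ne'
  field_simp

lemma imposes_mono {n k t : ℕ} {S : Set (Pn n)} (hS : S.Finite) (hkt : k ≤ t)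
    (h : ImposesIndep n k S) : ImposesIndep n t S := by
  classical
  haveI := hS.fintype
  have hdelta : ∀ p : S, ∃ g : homogeneousSubmodule (Fin (n+1)) ℂ t,
      ∀ s : S, eval (Projectivization.rep (s : Pn n)) (g : MvPolynomial (Fin (n+1)) ℂ)
        = if s = p then 1 else 0 := by
    intro p
    obtain ⟨f, hf⟩ := h (fun s => if s = p then 1 else 0)
    obtain ⟨i, hi⟩ : ∃ i, Projectivization.rep (p : Pn n) i ≠ 0 := by
      by_contra hc
      push_neg at hc
      exact Projectivization.rep_nonzero (p : Pn n) (funext hc)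
    refine ⟨⟨(f : MvPolynomial (Fin (n+1)) ℂ) *
        (C ((Projectivization.rep (p : Pn n) i)⁻¹) * X i) ^ (t - k), ?_⟩, ?_⟩
    · rw [mem_homogeneousSubmodule]
      have h1 : ((f : MvPolynomial (Fin (n+1)) ℂ)).IsHomogeneous k := f.2
      have h2 : ((C ((Projectivization.rep (p : Pn n) i)⁻¹) * X i : MvPolynomial (Fin (n+1)) ℂ)
          ^ (t - k)).IsHomogeneous (t - k) := by
        have : ((C ((Projectivization.rep (p : Pn n) i)⁻¹) * X i :
            MvPolynomial (Fin (n+1)) ℂ)).IsHomogeneous 1 := by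
          simpa using (isHomogeneous_X ℂ i).C_mul _
        simpa using this.pow (t - k)
      have := h1.mul h2
      rwa [Nat.add_sub_cancel' hkt] at this
    · intro s
      have hfs := congrFun hf s
      simp only at hfs
      rw [eval_mul, hfs]
      by_cases hsp : s = p
      · subst hsp
        simp [eval_pow, inv_mul_cancel₀ hi]
      · simp [hsp]
  choose g hg using hdelta
  intro φ
  refine ⟨∑ p : S, φ p • g p, ?_⟩
  funext s
  simp only
  have hcoe : ((∑ p : S, φ p • g p : homogeneousSubmodule (Fin (n+1)) ℂ t) :
      MvPolynomial (Fin (n+1)) ℂ) = ∑ p : S, φ p • (g p : MvPolynomial (Fin (n+1)) ℂ) := by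
    push_cast
    rfl
  rw [hcoe, map_sum]
  simp only [smul_eval, hg]
  simp

/-- Theorem 1 (a): if `ν_d(S)` minimally spans `q`, `|S| ≤ C(n+k,n)` with
`k = ⌊d/2⌋`, and `S` imposes independent conditions on degree-`k` forms, then the rank of
`q` is `|S|`: no set `A` with `|A| < |S|` has `q ∈ span ν_d(A)`. -/
theorem stmt_12 (n d : ℕ) (hn : 1 ≤ n) (hd : 2 ≤ d)
    (q : Projectivization ℂ (homogeneousSubmodule (Fin (n + 1)) ℂ d))
    (S : Set (Pn n)) (hS : S.Finite) (hmin : MinSpansVer n d S q)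
    (hcard : S.ncard ≤ Nat.choose (n + d / 2) n)
    (hind : ImposesIndep n (d / 2) S) :
    ∀ A : Set (Pn n), A.Finite → (Projectivization.rep q).1 ∈ veroneseSpan n d A →
      S.ncard ≤ A.ncard := by
  classical
  intro A hA hqA
  by_contra hlt
  push_neg at hlt
  haveI := hS.fintype
  haveI := hA.fintype
  set k := d / 2 with hk
  -- Step 1: a degree-k form vanishing on A but not at some point of S
  have hstep1 : ∃ f : homogeneousSubmodule (Fin (n+1)) ℂ k,
      (∀ a ∈ A, eval (Projectivization.rep a) (f : MvPolynomial (Fin (n+1)) ℂ) = 0) ∧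
      ∃ p ∈ S, eval (Projectivization.rep p) (f : MvPolynomial (Fin (n+1)) ℂ) ≠ 0 := by
    by_contra hcon
    push_neg at hcon
    have hker : LinearMap.ker (evalLM n k A) ≤ LinearMap.ker (evalLM n k S) := by
      intro f hf
      rw [LinearMap.mem_ker] at hf ⊢
      funext s
      have hA0 : ∀ a ∈ A, eval (Projectivization.rep a) (f : MvPolynomial (Fin (n+1)) ℂ) = 0 := by
        intro a ha
        exact congrFun hf ⟨a, ha⟩
      exact hcon f hA0 s.1 s.2
    have hsurjS : Surjective (evalLM n k S) := hind
    set u : (homogeneousSubmodule (Fin (n+1)) ℂ k ⧸ LinearMap.ker (evalLM n k A)) →ₗ[ℂ] (S → ℂ) :=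
      Submodule.liftQ _ (evalLM n k S) hker with hu_def
    have hu : Surjective u := by
      intro y
      obtain ⟨x, hx⟩ := hsurjS y
      exact ⟨Submodule.Quotient.mk x, hx⟩
    set e := LinearMap.quotKerEquivRange (evalLM n k A) with he_def
    set u' : ↥(LinearMap.range (evalLM n k A)) →ₗ[ℂ] (S → ℂ) :=
      u.comp (e.symm : ↥(LinearMap.range (evalLM n k A)) →ₗ[ℂ] _) with hu'_def
    have hu' : Surjective u' := hu.comp e.symm.surjective
    haveI : FiniteDimensional ℂ ↥(LinearMap.range (evalLM n k A)) :=
      FiniteDimensional.finiteDimensional_submodule _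
    have h1 : Module.finrank ℂ (↥S → ℂ) ≤ Module.finrank ℂ ↥(LinearMap.range (evalLM n k A)) := by
      calc Module.finrank ℂ (↥S → ℂ)
          = Module.finrank ℂ ↥(LinearMap.range u') := by
            rw [LinearMap.range_eq_top.mpr hu', finrank_top]
        _ ≤ Module.finrank ℂ ↥(LinearMap.range (evalLM n k A)) := LinearMap.finrank_range_le u'
    have h2 : Module.finrank ℂ ↥(LinearMap.range (evalLM n k A)) ≤ Module.finrank ℂ (↥A → ℂ) :=
      (LinearMap.range (evalLM n k A)).finrank_le
    rw [Module.finrank_pi ℂ] at h1 h2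
    have hScard : Fintype.card ↥S = S.ncard := by
      rw [← Nat.card_coe_set_eq, Nat.card_eq_fintype_card]
    have hAcard : Fintype.card ↥A = A.ncard := by
      rw [← Nat.card_coe_set_eq, Nat.card_eq_fintype_card]
    omega
  obtain ⟨f, hfA, p, hpS, hfp⟩ := hstep1
  -- Step 2: delta form of degree d - k at p
  have hkt : k ≤ d - k := by omega
  obtain ⟨g, hg⟩ := imposes_mono hS hkt hind
    (fun s : S => if (s : Pn n) = p then 1 else 0)
  -- the degree-d form h := f * g
  set h : MvPolynomial (Fin (n+1)) ℂ :=
    (f : MvPolynomial (Fin (n+1)) ℂ) * (g : MvPolynomial (Fin (n+1)) ℂ) with hh_def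
  have hh : h.IsHomogeneous d := by
    have h1 : ((f : MvPolynomial (Fin (n+1)) ℂ)).IsHomogeneous k := f.2
    have h2 : ((g : MvPolynomial (Fin (n+1)) ℂ)).IsHomogeneous (d - k) := g.2
    have := h1.mul h2
    rwa [show k + (d - k) = d by omega] at this
  -- dualPow h kills anything in the span of ν_d(A)
  have hL0 : dualPow n h (Projectivization.rep q).1 = 0 := by
    rw [veroneseSpan] at hqA
    obtain ⟨b, hbsupp, hbq⟩ := (Finsupp.mem_span_image_iff_linearCombination ℂ).mp hqA
    rw [← hbq, Finsupp.linearCombination_apply, map_finsuppSum]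
    refine Finset.sum_eq_zero fun a ha => ?_
    show dualPow n h (b a • linPow n d (Projectivization.rep a)) = 0
    rw [map_smul, dualPow_linPow n d h hh, hh_def, eval_mul,
      hfA a (hbsupp ha), zero_mul, smul_zero]
  -- compute dualPow h on the S-representation
  obtain ⟨c, hcsupp, hcq⟩ :=
    (Finsupp.mem_span_image_iff_linearCombination ℂ).mp hmin.1
  have hsum : dualPow n h (Projectivization.rep q).1
      = c p * eval (Projectivization.rep p) (f : MvPolynomial (Fin (n+1)) ℂ) := by
    rw [← hcq, Finsupp.linearCombination_apply, map_finsuppSum]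
    have hterm : ∀ s ∈ c.support, dualPow n h (c s • linPow n d (Projectivization.rep s))
        = if s = p then c p * eval (Projectivization.rep p) (f : MvPolynomial (Fin (n+1)) ℂ)
          else 0 := by
      intro s hs
      rw [map_smul, dualPow_linPow n d h hh, hh_def, eval_mul]
      have hsS : s ∈ S := hcsupp hs
      have hgs := congrFun hg ⟨s, hsS⟩
      simp only at hgs
      by_cases hsp : s = p
      · subst hsp
        rw [if_pos rfl] at hgs ⊢
        rw [hgs, mul_one, smul_eq_mul]
      · rw [if_neg hsp] at hgs ⊢
        rw [hgs, mul_zero, smul_zero]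
    refine (Finset.sum_congr rfl hterm).trans ?_
    rw [Finset.sum_ite_eq' c.support p]
    by_cases hpc : p ∈ c.support
    · rw [if_pos hpc]
    · rw [if_neg hpc]
      rw [Finsupp.notMem_support_iff.mp hpc, zero_mul]
  -- conclude c p = 0 and contradict minimality
  have hcp : c p = 0 := by
    rw [hL0] at hsum
    exact (mul_eq_zero.mp hsum.symm).resolve_right hfp
  have hpnots : p ∉ c.support := Finsupp.notMem_support_iff.mpr hcp
  have hmem : (Projectivization.rep q).1 ∈ veroneseSpan n d (S \ {p}) := by
    rw [veroneseSpan]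
    refine (Finsupp.mem_span_image_iff_linearCombination ℂ).mpr ⟨c, ?_, hcq⟩
    rw [Finsupp.mem_supported]
    intro x hx
    exact ⟨hcsupp hx, by rintro rfl; exact hpnots hx⟩
  refine hmin.2 (S \ {p}) ?_ hmem
  refine Set.ssubset_iff_subset_ne.mpr ⟨Set.diff_subset, fun he => ?_⟩
  rw [← he] at hpS
  exact hpS.2 rfl
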